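/- Let G be a finite simple graph, n ≥ 1 a natural number, and let k and T be real numbers with k·T ≠ 0. Then the Potts partition function Z_G(T) = Σ_{σ : V → {1,…,n}} exp(−E(σ)/(kT)), with E(σ) = Σ_{uv ∈ E(G)} δ(σ(u), σ(v)), satisfies Z_G(T) = Σ_{i, j ≥ 0} (−1)^i · (exp(−1/(kT)))^i · (n − 1)^j · χ^{i,j}(G), where χ^{i,j}(G) := Σ_{S ⊆ E(G)} (−1)^{|S|} · C(|S|, i) · C(c(S), j). That is, the Potts partition function is given in terms of powers of (n − 1) and powers of exp(−1/(kT)) with coefficients the corresponding Euler characteristics of the dichromatic graded homology of G. -/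
import Mathlib


/-- The number of connected components of the spanning subgraph `(V, S)`. -/
noncomputable def comps (V : Type) [Fintype V] (S : Finset (Sym2 V)) : ℕ :=
  Nat.card (SimpleGraph.fromEdgeSet (↑S : Set (Sym2 V))).ConnectedComponent

/-- The Potts energy `E(σ) = Σ_{uv ∈ E(G)} δ(σ(u), σ(v))`: the number of edges
whose endpoints receive equal spins under `σ`. -/
def pottsEnergy {V : Type} [Fintype V] [DecidableEq V] (G : SimpleGraph V)
    [DecidableRel G.Adj] {n : ℕ} (σ : V → Fin n) : ℕ :=
  ∑ e ∈ G.edgeFinset, if (Sym2.map σ e).IsDiag then 1 else 0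

lemma count_mono (V : Type) [Fintype V] [DecidableEq V] (n : ℕ) (S : Finset (Sym2 V)) :
    Nat.card {σ : V → Fin n // ∀ e ∈ S, (Sym2.map σ e).IsDiag} = n ^ comps V S := by
  set H := SimpleGraph.fromEdgeSet (↑S : Set (Sym2 V)) with hH
  have hadj : ∀ (σ : V → Fin n), (∀ e ∈ S, (Sym2.map σ e).IsDiag) →
      ∀ {a b : V}, H.Adj a b → σ a = σ b := by
    intro σ hσ a b hab
    rw [hH, SimpleGraph.fromEdgeSet_adj] at hab
    have := hσ _ hab.1
    rwa [Sym2.map_pair_eq, Sym2.mk_isDiag_iff] at this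
  have key : {σ : V → Fin n // ∀ e ∈ S, (Sym2.map σ e).IsDiag} ≃
      (H.ConnectedComponent → Fin n) :=
    { toFun := fun σ => SimpleGraph.ConnectedComponent.lift σ.1 (by
        have hw : ∀ (v w : V) (p : H.Walk v w), σ.1 v = σ.1 w := by
          intro v w p
          induction p with
          | nil => rfl
          | cons h _ ih => exact (hadj σ.1 σ.2 h).trans ih
        intro v w p _
        exact hw v w p)
      invFun := fun g => ⟨g ∘ H.connectedComponentMk, by
        intro e he
        induction e with
        | _ a b =>
          rw [Sym2.map_pair_eq, Sym2.mk_isDiag_iff]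
          by_cases hab : a = b
          · rw [hab]
          · have : H.Adj a b := by
              rw [hH, SimpleGraph.fromEdgeSet_adj]
              exact ⟨he, hab⟩
            simp only [Function.comp_apply,
              SimpleGraph.ConnectedComponent.connectedComponentMk_eq_of_adj this]⟩
      left_inv := fun σ => Subtype.ext (funext fun v => rfl)
      right_inv := fun g => funext fun c => by
        refine c.ind ?_
        intro v
        rfl }
  rw [Nat.card_congr key, Nat.card_fun, Nat.card_eq_fintype_card (α := Fin n),
    Fintype.card_fin]
  rfl

lemma comps_le (V : Type) [Fintype V] (S : Finset (Sym2 V)) :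
    comps V S ≤ Fintype.card V := by
  rw [← Nat.card_eq_fintype_card]
  exact Nat.card_le_card_of_surjective
    (SimpleGraph.fromEdgeSet (↑S : Set (Sym2 V))).connectedComponentMk
    (Quot.mk_surjective)

lemma sum_range_choose_ext (y : ℝ) (m N : ℕ) (h : m ≤ N) :
    ∑ i ∈ Finset.range (N + 1), y ^ i * (m.choose i : ℝ) = (1 + y) ^ m := by
  rw [← Finset.sum_subset (Finset.range_subset_range.mpr (by omega) :
      Finset.range (m + 1) ⊆ Finset.range (N + 1))]
  · rw [add_comm (1 : ℝ) y, add_pow]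
    refine Finset.sum_congr rfl fun i _ => ?_
    rw [one_pow, mul_one]
  · intro i _ hi
    rw [Nat.choose_eq_zero_of_lt (by simpa using hi)]
    simp

/-- The Potts partition function `Z_G(T) = Σ_σ exp(−E(σ)/(kT))` is a bigraded Euler
characteristic of the dichromatic homology:
`Z_G(T) = Σ_{i,j} (−1)^i (exp(−1/(kT)))^i (n − 1)^j χ^{i,j}(G)`,
where `χ^{i,j}(G) = Σ_{S ⊆ E(G)} (−1)^{|S|} C(|S|, i) C(c(S), j)`.
(All terms with `i > |E(G)|` or `j > |V|` vanish, so those ranges suffice.) -/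
theorem potts_eq_bigraded_euler_char (V : Type) [Fintype V] [DecidableEq V]
    (G : SimpleGraph V) [DecidableRel G.Adj] (n : ℕ) (hn : 1 ≤ n)
    (k T : ℝ) (hkT : k * T ≠ 0) :
    ∑ σ : V → Fin n, Real.exp (-(pottsEnergy G σ : ℝ) / (k * T)) =
      ∑ i ∈ Finset.range (G.edgeFinset.card + 1),
        ∑ j ∈ Finset.range (Fintype.card V + 1),
          (-1) ^ i * Real.exp (-1 / (k * T)) ^ i * ((n : ℝ) - 1) ^ j *
            ∑ S ∈ G.edgeFinset.powerset,
              (-1) ^ S.card * (S.card.choose i : ℝ) * ((comps V S).choose j : ℝ) := by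
  classical
  set x : ℝ := Real.exp (-1 / (k * T)) with hx
  -- Step 1: LHS equals RSW expansion ∑_S (x-1)^|S| n^{c(S)}
  have lhs_eq : ∑ σ : V → Fin n, Real.exp (-(pottsEnergy G σ : ℝ) / (k * T)) =
      ∑ S ∈ G.edgeFinset.powerset, (x - 1) ^ S.card * (n : ℝ) ^ comps V S := by
    have step1 : ∀ σ : V → Fin n,
        Real.exp (-(pottsEnergy G σ : ℝ) / (k * T)) =
        ∑ S ∈ G.edgeFinset.powerset,
          (if (∀ e ∈ S, (Sym2.map σ e).IsDiag) then (x - 1) ^ S.card else 0) := by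
      intro σ
      have h1 : Real.exp (-(pottsEnergy G σ : ℝ) / (k * T)) = x ^ pottsEnergy G σ := by
        rw [hx, ← Real.exp_nat_mul]
        congr 1
        ring
      rw [h1, pottsEnergy, ← Finset.prod_pow_eq_pow_sum]
      have h2 : ∀ e ∈ G.edgeFinset,
          x ^ (if (Sym2.map σ e).IsDiag then 1 else 0) =
          (if (Sym2.map σ e).IsDiag then x - 1 else 0) + 1 := by
        intro e _
        split <;> ring
      rw [Finset.prod_congr rfl h2, Finset.prod_add]
      refine Finset.sum_congr rfl fun S hS => ?_
      rw [Finset.prod_const_one, mul_one]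
      by_cases hall : ∀ e ∈ S, (Sym2.map σ e).IsDiag
      · rw [if_pos hall, Finset.prod_congr rfl (fun e he => if_pos (hall e he)),
          Finset.prod_const]
      · push_neg at hall
        obtain ⟨e, he, hne⟩ := hall
        rw [if_neg (by push_neg; exact ⟨e, he, hne⟩),
          Finset.prod_eq_zero he
            (show (if (Sym2.map σ e).IsDiag then x - 1 else 0) = 0 from if_neg hne)]
    rw [Finset.sum_congr rfl fun σ _ => step1 σ, Finset.sum_comm]
    refine Finset.sum_congr rfl fun S _ => ?_
    rw [Finset.sum_ite, Finset.sum_const, Finset.sum_const_zero, add_zero,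
      nsmul_eq_mul]
    rw [← Fintype.card_subtype, ← Nat.card_eq_fintype_card, count_mono]
    push_cast
    ring
  rw [lhs_eq]
  -- Step 2: RHS also equals the same expansion
  have rhs_eq : ∀ S ∈ G.edgeFinset.powerset,
      (x - 1) ^ S.card * (n : ℝ) ^ comps V S =
      ∑ i ∈ Finset.range (G.edgeFinset.card + 1),
        ∑ j ∈ Finset.range (Fintype.card V + 1),
          (-1) ^ i * x ^ i * ((n : ℝ) - 1) ^ j *
            ((-1) ^ S.card * (S.card.choose i : ℝ) * ((comps V S).choose j : ℝ)) := by
    intro S hS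
    have hcard : S.card ≤ G.edgeFinset.card :=
      Finset.card_le_card (Finset.mem_powerset.mp hS)
    have hsum1 : ∑ i ∈ Finset.range (G.edgeFinset.card + 1),
        (-x) ^ i * ((S.card.choose i : ℝ)) = (1 + -x) ^ S.card :=
      sum_range_choose_ext (-x) S.card G.edgeFinset.card hcard
    have hsum2 : ∑ j ∈ Finset.range (Fintype.card V + 1),
        ((n : ℝ) - 1) ^ j * (((comps V S).choose j : ℝ)) = (1 + ((n : ℝ) - 1)) ^ comps V S :=
      sum_range_choose_ext ((n : ℝ) - 1) (comps V S) (Fintype.card V) (comps_le V S)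
    have expand : ∑ i ∈ Finset.range (G.edgeFinset.card + 1),
        ∑ j ∈ Finset.range (Fintype.card V + 1),
          (-1) ^ i * x ^ i * ((n : ℝ) - 1) ^ j *
            ((-1) ^ S.card * (S.card.choose i : ℝ) * ((comps V S).choose j : ℝ)) =
        (-1 : ℝ) ^ S.card *
          ((∑ i ∈ Finset.range (G.edgeFinset.card + 1), (-x) ^ i * (S.card.choose i : ℝ)) *
           (∑ j ∈ Finset.range (Fintype.card V + 1),
             ((n : ℝ) - 1) ^ j * ((comps V S).choose j : ℝ))) := by
      rw [Finset.sum_mul_sum, Finset.mul_sum]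
      refine Finset.sum_congr rfl fun i _ => ?_
      rw [Finset.mul_sum]
      refine Finset.sum_congr rfl fun j _ => ?_
      rw [neg_pow x i]
      ring
    rw [expand, hsum1, hsum2]
    have hb : (1 : ℝ) + -x = 1 - x := by ring
    have h2 : (1 : ℝ) + ((n : ℝ) - 1) = (n : ℝ) := by ring
    have hc : (x - 1 : ℝ) = -1 * (1 - x) := by ring
    rw [hb, h2, hc, mul_pow, mul_assoc]
  rw [Finset.sum_congr rfl rhs_eq, Finset.sum_comm]
  refine Finset.sum_congr rfl fun i _ => ?_
  rw [Finset.sum_comm]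
  refine Finset.sum_congr rfl fun j _ => ?_
  rw [Finset.mul_sum]
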